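/- For all x, y ∈ 𝔲_{13}, the element x ∧ y lies in Im(d3); likewise, for all x, y ∈ 𝔲_{24}, the element x ∧ y lies in Im(d3). -/

import Mathlib

/-!
If `z` commutes with `x` and `y`, the boundary `d3(x ∧ y ∧ z)` reduces to `z ∧ [x, y]`.
For `x` in the block `(a, c)` and `a < b < c`, every elementary matrix `E_ij` of that block is
`[E_ik, E_kj]` for any `k` in the (nonempty) middle block, and `x` commutes with both factors since
all the relevant block products vanish. Hence `x ∧ E_ij ∈ Im d3`, and `x ∧ y ∈ Im d3` for every
`y` in the block by linearity.
-/

attribute [local instance 100] LieRing.ofAssociativeRing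

/-- Index type with four consecutive blocks of sizes `n 0, n 1, n 2, n 3`
(corresponding to the partition `I1 ⊔ I2 ⊔ I3 ⊔ I4` of `{1, …, N}`). -/
abbrev BIdx (n : Fin 4 → ℕ) := Σ a : Fin 4, Fin (n a)

/-- The Lie algebra `𝔲` of strictly block upper triangular matrices. -/
def uLie (n : Fin 4 → ℕ) (K : Type*) [Field K] :
    LieSubalgebra K (Matrix (BIdx n) (BIdx n) K) where
  carrier := {M | ∀ (a b : Fin 4) (i : Fin (n a)) (j : Fin (n b)), b ≤ a → M ⟨a, i⟩ ⟨b, j⟩ = 0}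
  add_mem' := by
    intro x y hx hy a b i j h
    simp [Matrix.add_apply, hx a b i j h, hy a b i j h]
  zero_mem' := by intro a b i j h; simp
  smul_mem' := by
    intro c x hx a b i j h
    simp [Matrix.smul_apply, hx a b i j h]
  lie_mem' := by
    intro x y hx hy a b i j h
    have key : ∀ u v : Matrix (BIdx n) (BIdx n) K,
        (∀ (a b : Fin 4) (i : Fin (n a)) (j : Fin (n b)), b ≤ a → u ⟨a, i⟩ ⟨b, j⟩ = 0) →
        (∀ (a b : Fin 4) (i : Fin (n a)) (j : Fin (n b)), b ≤ a → v ⟨a, i⟩ ⟨b, j⟩ = 0) →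
        (u * v) ⟨a, i⟩ ⟨b, j⟩ = 0 := by
      intro u v hu hv
      rw [Matrix.mul_apply]
      apply Finset.sum_eq_zero
      rintro ⟨c, kk⟩ -
      by_cases hc : c ≤ a
      · rw [hu a c i kk hc, zero_mul]
      · rw [hv c b kk j (h.trans (le_of_not_ge hc)), mul_zero]
    rw [Ring.lie_def, Matrix.sub_apply, key x y hx hy, key y x hy hx, sub_zero]

/-- The type of elements of `𝔲`. -/
abbrev UU (n : Fin 4 → ℕ) (K : Type*) [Field K] := ↥(uLie n K)

/-- `x ∧ y`, as an element of the second exterior power `⋀[K]^2 𝔲`. -/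
noncomputable def wedge {n : Fin 4 → ℕ} {K : Type*} [Field K] (x y : UU n K) :
    ↥(⋀[K]^2 (UU n K)) :=
  ⟨ExteriorAlgebra.ιMulti K 2 ![x, y], ExteriorAlgebra.ιMulti_range K 2 ⟨![x, y], rfl⟩⟩

/-- `x` is supported on the `(a, b)` block. -/
def inBlock {n : Fin 4 → ℕ} {K : Type*} [Field K] (a b : Fin 4) (x : UU n K) : Prop :=
  ∀ (c d : Fin 4) (i : Fin (n c)) (j : Fin (n d)), ¬(c = a ∧ d = b) →
    (x : Matrix (BIdx n) (BIdx n) K) ⟨c, i⟩ ⟨d, j⟩ = 0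

/-- The image of the Chevalley–Eilenberg differential `d3 : Λ³𝔲 → Λ²𝔲`: the span of all
`z ∧ [x,y] + y ∧ [z,x] + x ∧ [y,z]`. -/
noncomputable def Imd3 (n : Fin 4 → ℕ) (K : Type*) [Field K] :
    Submodule K ↥(⋀[K]^2 (UU n K)) :=
  Submodule.span K
    {w | ∃ x y z : UU n K, w = wedge z ⁅x, y⁆ + wedge y ⁅z, x⁆ + wedge x ⁅y, z⁆}

section

variable {n : Fin 4 → ℕ} {K : Type*} [Field K]

theorem coe_wedge (x y : UU n K) :
    (wedge x y : ExteriorAlgebra K (UU n K)) = ExteriorAlgebra.ι K x * ExteriorAlgebra.ι K y := by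
  simp [wedge, ExteriorAlgebra.ιMulti_apply]

noncomputable def wedgeLeft (x : UU n K) : UU n K →ₗ[K] ↥(⋀[K]^2 (UU n K)) where
  toFun := wedge x
  map_add' y z := Subtype.ext (by simp [coe_wedge, mul_add])
  map_smul' c y := Subtype.ext (by simp [coe_wedge])

theorem wedge_zero_right (x : UU n K) : wedge x 0 = 0 :=
  (wedgeLeft x).map_zero

theorem wedge_lie_mem_Imd3 {x y z : UU n K} (hzx : ⁅z, x⁆ = 0) (hyz : ⁅y, z⁆ = 0) :
    wedge z ⁅x, y⁆ ∈ Imd3 n K := by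
  have h : wedge z ⁅x, y⁆ = wedge z ⁅x, y⁆ + wedge y ⁅z, x⁆ + wedge x ⁅y, z⁆ := by
    rw [hzx, hyz, wedge_zero_right, wedge_zero_right, add_zero, add_zero]
  exact h ▸ Submodule.subset_span ⟨x, y, z, rfl⟩

theorem mul_eq_zero_of_inBlock {a b c d : Fin 4} {x y : UU n K}
    (hx : inBlock a b x) (hy : inBlock c d y) (h : b ≠ c) :
    (x : Matrix (BIdx n) (BIdx n) K) * y = 0 := by
  ext ⟨p, i⟩ ⟨q, j⟩
  rw [Matrix.mul_apply, Matrix.zero_apply]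
  refine Finset.sum_eq_zero fun ⟨r, k⟩ _ => ?_
  by_cases hpr : p = a ∧ r = b
  · rw [hy r q k j fun hrq => h (hpr.2 ▸ hrq.1), mul_zero]
  · rw [hx p r i k hpr, zero_mul]

theorem lie_eq_zero_of_inBlock {a b c d : Fin 4} {x y : UU n K}
    (hx : inBlock a b x) (hy : inBlock c d y) (hbc : b ≠ c) (hda : d ≠ a) : ⁅x, y⁆ = 0 :=
  Subtype.ext <| (Ring.lie_def _ _).trans <| by
    rw [mul_eq_zero_of_inBlock hx hy hbc, mul_eq_zero_of_inBlock hy hx hda, sub_zero]; rfl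

def singleU {a b : Fin 4} (hab : a < b) (i : Fin (n a)) (j : Fin (n b)) : UU n K :=
  ⟨Matrix.single ⟨a, i⟩ ⟨b, j⟩ 1, fun c d _ _ hdc => Matrix.single_apply_of_ne _ _ _ _ _ <| by
    rintro ⟨h1, h2⟩
    cases h1; cases h2
    exact hdc.not_gt hab⟩

theorem inBlock_singleU {a b : Fin 4} (hab : a < b) (i : Fin (n a)) (j : Fin (n b)) :
    inBlock a b (singleU (K := K) hab i j) := fun _ _ _ _ h =>
  Matrix.single_apply_of_ne _ _ _ _ _ fun ⟨h1, h2⟩ =>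
    h ⟨congrArg Sigma.fst h1.symm, congrArg Sigma.fst h2.symm⟩

theorem lie_singleU_singleU {a b c : Fin 4} (hab : a < b) (hbc : b < c)
    (i : Fin (n a)) (k : Fin (n b)) (j : Fin (n c)) :
    ⁅singleU (K := K) hab i k, singleU (K := K) hbc k j⁆ = singleU (hab.trans hbc) i j := by
  refine Subtype.ext <| (Ring.lie_def _ _).trans ?_
  have hji : (⟨c, j⟩ : BIdx n) ≠ ⟨a, i⟩ := fun h => (hab.trans hbc).ne' (congrArg Sigma.fst h)
  change Matrix.single _ _ (1 : K) * Matrix.single _ _ 1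
    - Matrix.single _ _ 1 * Matrix.single _ _ 1 = _
  rw [Matrix.single_mul_single_same, Matrix.single_mul_single_of_ne (h := hji), sub_zero, one_mul]
  rfl

theorem eq_sum_singleU_of_inBlock {a b : Fin 4} (hab : a < b) {y : UU n K} (hy : inBlock a b y) :
    y = ∑ i, ∑ j, (y : Matrix (BIdx n) (BIdx n) K) ⟨a, i⟩ ⟨b, j⟩ • singleU hab i j := by
  ext ⟨p, i'⟩ ⟨q, j'⟩
  simp only [singleU, AddSubmonoidClass.coe_finsetSum, SetLike.val_smul, Matrix.smul_single,
    smul_eq_mul, mul_one, Matrix.sum_apply, Matrix.single_apply, Sigma.mk.injEq]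
  by_cases hpq : p = a ∧ q = b
  · obtain ⟨rfl, rfl⟩ := hpq
    simp [ite_and]
  · rw [hy p q i' j' hpq]
    refine (Finset.sum_eq_zero fun i _ => Finset.sum_eq_zero fun j _ => if_neg ?_).symm
    rintro ⟨h1, h2⟩
    exact hpq ⟨congrArg Sigma.fst h1.symm, congrArg Sigma.fst h2.symm⟩

theorem wedge_mem_Imd3_of_inBlock {a b c : Fin 4} (hab : a < b) (hbc : b < c) (hb : 0 < n b)
    {x y : UU n K} (hx : inBlock a c x) (hy : inBlock a c y) : wedge x y ∈ Imd3 n K := by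
  have hac := hab.trans hbc
  let k : Fin (n b) := ⟨0, hb⟩
  change wedgeLeft x y ∈ Imd3 n K
  rw [eq_sum_singleU_of_inBlock hac hy]
  simp only [map_sum, map_smul]
  refine Submodule.sum_mem _ fun i _ => Submodule.sum_mem _ fun j _ => Submodule.smul_mem _ _ ?_
  rw [← lie_singleU_singleU hab hbc i k j]
  exact wedge_lie_mem_Imd3
    (lie_eq_zero_of_inBlock hx (inBlock_singleU hab i k) hac.ne' hab.ne')
    (lie_eq_zero_of_inBlock (inBlock_singleU hbc k j) hx hac.ne' hbc.ne')

end

theorem stmt_14_general (n : Fin 4 → ℕ) (h1 : 3 ≤ n 1) (h2 : 3 ≤ n 2) (K : Type*) [Field K] :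
    (∀ x y : UU n K, inBlock 0 2 x → inBlock 0 2 y → wedge x y ∈ Imd3 n K) ∧
    (∀ x y : UU n K, inBlock 1 3 x → inBlock 1 3 y → wedge x y ∈ Imd3 n K) :=
  ⟨fun _ _ => wedge_mem_Imd3_of_inBlock (b := 1) (by decide) (by decide) (by omega),
    fun _ _ => wedge_mem_Imd3_of_inBlock (b := 2) (by decide) (by decide) (by omega)⟩

/-- For all `x, y ∈ 𝔲_{13}` (block `(0,2)`), `x ∧ y ∈ Im(d3)`; likewise for all
`x, y ∈ 𝔲_{24}` (block `(1,3)`), `x ∧ y ∈ Im(d3)`. -/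
theorem stmt_14 (n : Fin 4 → ℕ) (h0 : 1 ≤ n 0) (h1 : 3 ≤ n 1) (h2 : 3 ≤ n 2)
    (h3 : 1 ≤ n 3) (K : Type*) [Field K] :
    (∀ x y : UU n K, inBlock 0 2 x → inBlock 0 2 y → wedge x y ∈ Imd3 n K) ∧
    (∀ x y : UU n K, inBlock 1 3 x → inBlock 1 3 y → wedge x y ∈ Imd3 n K) :=
  stmt_14_general n h1 h2 K
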